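/- Let N ≥ 2 and let t_1⋯t_p be an admissible block. Then for every integer q with 1 ≤ q and 2q < p, one has (reflection of t_1⋯t_q)^+ ≤ t_{q+1}⋯t_{2q} in lexicographic order, that is, the word (N−1−t_1)⋯(N−1−t_q) with its last digit incremented is lexicographically ≤ t_{q+1}⋯t_{2q}. -/

import Mathlib

/-- Reflection of a block: each digit `c` becomes `N - 1 - c`. -/
def reflB (N : ℕ) (w : List ℕ) : List ℕ := w.map (fun c => N - 1 - c)

/-- The block `w` with its last digit incremented by one. -/
def plusB (w : List ℕ) : List ℕ := w.dropLast ++ [w.getLast! + 1]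

/-- The `i`-th cyclic rotation of the block `w` (0-indexed). -/
def rotB (w : List ℕ) (i : ℕ) : List ℕ := w.drop i ++ w.take i

/-- The lexicographic inequalities defining admissibility of a block. -/
def AdmissibleIneq (N : ℕ) (w : List ℕ) : Prop :=
  ∀ i < w.length,
    reflB N w ≤ rotB w i ∧ plusB (w.drop i) ++ reflB N (w.take i) ≤ plusB w

/-- An admissible block in `{0, …, N-1}`. -/
def Admissible (N : ℕ) (w : List ℕ) : Prop :=
  w ≠ [] ∧ (∀ c ∈ w, c < N) ∧ w.getLast! < N - 1 ∧ AdmissibleIneq N w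

/-- Prefixes of the generalized Thue–Morse sequence generated by `plusB w`:
`gtmBlock N w n` is the prefix `θ_1 ⋯ θ_{2^n p}`. -/
def gtmBlock (N : ℕ) (w : List ℕ) : ℕ → List ℕ
  | 0 => plusB w
  | n + 1 => gtmBlock N w n ++ plusB (reflB N (gtmBlock N w n))

/-- The generalized Thue–Morse sequence generated by `plusB w`, 0-indexed:
`gtm N w n = θ_{n+1}`. -/
def gtm (N : ℕ) (w : List ℕ) : ℕ → ℕ := fun n => (gtmBlock N w n).getD n 0

/-- Strict lexicographic order on infinite sequences of digits. -/
def seqLt (a b : ℕ → ℕ) : Prop := ∃ n, (∀ k < n, a k = b k) ∧ a n < b n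

/-- Lexicographic order on infinite sequences of digits. -/
def seqLe (a b : ℕ → ℕ) : Prop := seqLt a b ∨ a = b

/-- Shift of a sequence by `k` places. -/
def shift (a : ℕ → ℕ) (k : ℕ) : ℕ → ℕ := fun n => a (n + k)

/-- The periodic sequence `w^∞` obtained by repeating the block `w`. -/
def per (w : List ℕ) : ℕ → ℕ := fun n => w.getD (n % w.length) 0

/-- Reflection of an infinite sequence. -/
def reflSeq (N : ℕ) (a : ℕ → ℕ) : ℕ → ℕ := fun n => N - 1 - a n

/-- The classical Thue–Morse sequence: parity of the binary digit sum. -/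
def tm (i : ℕ) : ℕ := (Nat.digits 2 i).sum % 2

/-- Number of length-`n` words appearing in sequences of `Z`. -/
noncomputable def wordCount (Z : Set (ℕ → ℕ)) (n : ℕ) : ℕ :=
  Set.ncard { u : List ℕ | u.length = n ∧ ∃ d ∈ Z, ∀ k < n, u.getD k 0 = d k }

/-- `Z` has topological entropy `h`. -/
def hasEntropy (Z : Set (ℕ → ℕ)) (h : ℝ) : Prop :=
  Filter.Tendsto (fun n : ℕ => Real.log (wordCount Z n) / n) Filter.atTop (nhds h)

namespace Stmt6Aux

lemma getLast!_concat (l : List ℕ) (a : ℕ) : (l ++ [a]).getLast! = a :=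
  List.getLast!_of_getLast? List.getLast?_concat

lemma plusB_concat (l : List ℕ) (a : ℕ) : plusB (l ++ [a]) = l ++ [a + 1] := by
  unfold plusB
  rw [List.dropLast_concat, getLast!_concat]

lemma plusB_append (a b : List ℕ) (hb : b ≠ []) : plusB (a ++ b) = a ++ plusB b := by
  rcases List.eq_nil_or_concat b with rfl | ⟨L, c, rfl⟩
  · exact absurd rfl hb
  · rw [List.concat_eq_append, ← List.append_assoc, plusB_concat, plusB_concat,
      List.append_assoc]

lemma length_plusB (v : List ℕ) (hv : v ≠ []) : (plusB v).length = v.length := by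
  rcases List.eq_nil_or_concat v with rfl | ⟨L, c, rfl⟩
  · exact absurd rfl hv
  · rw [List.concat_eq_append, plusB_concat]; simp

lemma plusB_take_drop {q : ℕ} {v : List ℕ} (h : q < v.length) :
    plusB v = v.take q ++ plusB (v.drop q) := by
  have hd : v.drop q ≠ [] := by
    intro he
    have := congrArg List.length he
    simp at this; omega
  conv_lhs => rw [← List.take_append_drop q v]
  exact plusB_append _ _ hd

lemma lt_plusB (v : List ℕ) (hv : v ≠ []) : v < plusB v := by
  rcases List.eq_nil_or_concat v with rfl | ⟨L, c, rfl⟩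
  · exact absurd rfl hv
  · rw [List.concat_eq_append, plusB_concat]
    show List.Lex (· < ·) _ _
    exact List.Lex.append_left _ (List.Lex.rel (Nat.lt_succ_self c)) L

lemma lex_append_of_length_eq {a b : List ℕ} (hlen : a.length = b.length)
    (hab : List.Lex (· < ·) a b) (z z' : List ℕ) :
    List.Lex (· < ·) (a ++ z) (b ++ z') := by
  induction hab generalizing z z' with
  | nil => simp at hlen
  | @cons x as bs h ih =>
    simp only [List.cons_append]
    exact List.Lex.cons (ih (by simpa using hlen) z z')
  | @rel _ as _ bs h =>
    simp only [List.cons_append]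
    exact List.Lex.rel h

lemma le_of_append_le {a b z z' : List ℕ} (hlen : a.length = b.length)
    (h : a ++ z ≤ b ++ z') : a ≤ b := by
  by_contra hba
  rw [not_le] at hba
  exact absurd h (not_le.mpr (lex_append_of_length_eq hlen.symm hba z' z))

lemma le_of_append_left_le {a z z' : List ℕ} (h : a ++ z ≤ a ++ z') : z ≤ z' := by
  by_contra hzz
  rw [not_le] at hzz
  exact absurd h (not_le.mpr (List.Lex.append_left _ hzz a))

lemma cons_le_cons {a : ℕ} {z z' : List ℕ} (h : z ≤ z') : (a :: z) ≤ (a :: z') := by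
  rcases lt_or_eq_of_le h with h | rfl
  · exact le_of_lt (show List.Lex (· < ·) _ _ from List.Lex.cons (r := (· < ·)) h)
  · exact le_rfl

lemma plusB_le_of_lt {x y : List ℕ} (hlen : x.length = y.length)
    (hxy : List.Lex (· < ·) x y) : plusB x ≤ y := by
  induction hxy with
  | nil => simp at hlen
  | @cons a as bs h ih =>
      have hlen' : as.length = bs.length := by simpa using hlen
      have hane : as ≠ [] := by
        intro he; subst he
        have : bs = [] := List.length_eq_zero_iff.mp hlen'.symm
        subst this; cases h
      have : plusB (a :: as) = a :: plusB as := by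
        have := plusB_append [a] as hane
        simpa using this
      rw [this]
      exact cons_le_cons (ih hlen')
  | @rel a as b bs h =>
      rcases List.eq_nil_or_concat as with rfl | ⟨L, c, rfl⟩
      · have : bs = [] := by simpa using hlen.symm
        subst this
        have : plusB [a] = [a + 1] := by
          unfold plusB; simp [List.getLast!]
        rw [this]
        rcases lt_or_eq_of_le (Nat.succ_le_of_lt h) with h' | h'
        · exact le_of_lt (List.Lex.rel h')
        · obtain rfl : a + 1 = b := h'
          exact le_rfl
      · simp only [List.concat_eq_append]
        have : plusB (a :: (L ++ [c])) = a :: (L ++ [c + 1]) := by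
          rw [show a :: (L ++ [c]) = (a :: L) ++ [c] by simp, plusB_concat]; simp
        rw [this]
        exact le_of_lt (List.Lex.rel h)

lemma reflB_append (N : ℕ) (a b : List ℕ) :
    reflB N (a ++ b) = reflB N a ++ reflB N b := List.map_append

lemma length_reflB (N : ℕ) (a : List ℕ) : (reflB N a).length = a.length :=
  List.length_map _

lemma reflB_reflB {N : ℕ} {a : List ℕ} (ha : ∀ c ∈ a, c < N) :
    reflB N (reflB N a) = a := by
  induction a with
  | nil => rfl
  | cons x xs ih =>
    have hx : x < N := ha x (by simp)
    have hxs := ih (fun c hc => ha c (by simp [hc]))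
    unfold reflB at hxs ⊢
    simp only [List.map_cons, List.cons.injEq]
    exact ⟨by omega, hxs⟩

end Stmt6Aux

namespace Stmt6Aux

lemma key (N : ℕ) (u : List ℕ) (hune : u ≠ []) (hud : ∀ c ∈ u, c < N) :
    ∀ (n : ℕ) (v : List ℕ), v.length ≤ n → v ≠ [] →
      ¬ (u ++ reflB N v ≤ v ++ u ∧
          plusB v ++ (reflB N u ++ u) ≤ u ++ (reflB N u ++ plusB v)) ∧
      ¬ (reflB N u ++ reflB N v ≤ v ++ u ∧
          plusB v ++ (reflB N u ++ u) ≤ reflB N u ++ (u ++ plusB v)) := by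
  intro n
  induction n with
  | zero =>
    intro v hvl hvne
    exact absurd (List.length_eq_zero_iff.mp (Nat.le_zero.mp hvl)) hvne
  | succ n ih =>
    intro v hvl hvne
    have huq : 1 ≤ u.length := List.length_pos_iff.mpr hune
    have hvm : 1 ≤ v.length := List.length_pos_iff.mpr hvne
    constructor
    · rintro ⟨h1, h2⟩
      rcases le_or_gt v.length u.length with hmq | hmq
      · -- |v| ≤ |u| : direct contradiction
        have hlen1 : (u.take v.length).length = v.length := by
          rw [List.length_take]; omega
        have aux1 : u.take v.length ++ (u.drop v.length ++ reflB N v) ≤ v ++ u := by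
          rw [← List.append_assoc, List.take_append_drop]; exact h1
        have l1 : u.take v.length ≤ v := le_of_append_le hlen1 aux1
        have aux2 : plusB v ++ (reflB N u ++ u) ≤
            u.take v.length ++ (u.drop v.length ++ (reflB N u ++ plusB v)) := by
          conv_rhs => rw [← List.append_assoc, List.take_append_drop]
          exact h2
        have l2 : plusB v ≤ u.take v.length :=
          le_of_append_le (by rw [length_plusB v hvne, hlen1]) aux2
        exact absurd (lt_of_lt_of_le (lt_plusB v hvne) (le_trans l2 l1)) (lt_irrefl v)
      · -- |u| < |v| : descent
        have hlen1 : u.length = (v.take u.length).length := by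
          rw [List.length_take]; omega
        have aux1 : u ++ reflB N v ≤ v.take u.length ++ (v.drop u.length ++ u) := by
          rw [← List.append_assoc, List.take_append_drop]; exact h1
        have l1 : u ≤ v.take u.length := le_of_append_le hlen1 aux1
        have aux2 : v.take u.length ++ (plusB (v.drop u.length) ++ (reflB N u ++ u)) ≤
            u ++ (reflB N u ++ plusB v) := by
          rw [← List.append_assoc, ← plusB_take_drop hmq]; exact h2
        have l2 : v.take u.length ≤ u := le_of_append_le hlen1.symm aux2
        have he : v.take u.length = u := le_antisymm l2 l1
        have hv2ne : v.drop u.length ≠ [] := by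
          intro hnil
          have := congrArg List.length hnil
          simp only [List.length_drop, List.length_nil] at this
          omega
        have hv : v = u ++ v.drop u.length := by
          conv_lhs => rw [← List.take_append_drop u.length v, he]
        have h1' : reflB N u ++ reflB N (v.drop u.length) ≤ v.drop u.length ++ u := by
          apply le_of_append_left_le (a := u)
          rw [hv] at h1
          rw [reflB_append, List.append_assoc] at h1
          exact h1
        have h2' : plusB (v.drop u.length) ++ (reflB N u ++ u) ≤
            reflB N u ++ (u ++ plusB (v.drop u.length)) := by
          apply le_of_append_left_le (a := u)
          nth_rewrite 1 [hv] at h2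
          rw [plusB_append u _ hv2ne, List.append_assoc] at h2
          nth_rewrite 2 [hv] at h2
          rw [plusB_append u _ hv2ne] at h2
          exact h2
        have hlv2 : (v.drop u.length).length ≤ n := by
          rw [List.length_drop]; omega
        exact (ih (v.drop u.length) hlv2 hv2ne).2 ⟨h1', h2'⟩
    · rintro ⟨h1, h2⟩
      have hrlen : (reflB N u).length = u.length := length_reflB N u
      rcases le_or_gt v.length u.length with hmq | hmq
      · -- |v| ≤ |u| : direct contradiction
        have hlen1 : ((reflB N u).take v.length).length = v.length := by
          rw [List.length_take]; omega
        have aux1 : (reflB N u).take v.length ++ ((reflB N u).drop v.length ++ reflB N v)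
            ≤ v ++ u := by
          rw [← List.append_assoc, List.take_append_drop]; exact h1
        have l1 : (reflB N u).take v.length ≤ v := le_of_append_le hlen1 aux1
        have aux2 : plusB v ++ (reflB N u ++ u) ≤
            (reflB N u).take v.length ++ ((reflB N u).drop v.length ++ (u ++ plusB v)) := by
          conv_rhs => rw [← List.append_assoc, List.take_append_drop]
          exact h2
        have l2 : plusB v ≤ (reflB N u).take v.length :=
          le_of_append_le (by rw [length_plusB v hvne, hlen1]) aux2
        exact absurd (lt_of_lt_of_le (lt_plusB v hvne) (le_trans l2 l1)) (lt_irrefl v)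
      · -- |u| < |v| : descent
        have hlen1 : (reflB N u).length = (v.take u.length).length := by
          rw [List.length_take, hrlen]; omega
        have aux1 : reflB N u ++ reflB N v ≤ v.take u.length ++ (v.drop u.length ++ u) := by
          rw [← List.append_assoc, List.take_append_drop]; exact h1
        have l1 : reflB N u ≤ v.take u.length := le_of_append_le hlen1 aux1
        have aux2 : v.take u.length ++ (plusB (v.drop u.length) ++ (reflB N u ++ u)) ≤
            reflB N u ++ (u ++ plusB v) := by
          rw [← List.append_assoc, ← plusB_take_drop hmq]; exact h2
        have l2 : v.take u.length ≤ reflB N u := le_of_append_le hlen1.symm aux2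
        have he : v.take u.length = reflB N u := le_antisymm l2 l1
        have hv2ne : v.drop u.length ≠ [] := by
          intro hnil
          have := congrArg List.length hnil
          simp only [List.length_drop, List.length_nil] at this
          omega
        have hv : v = reflB N u ++ v.drop u.length := by
          conv_lhs => rw [← List.take_append_drop u.length v, he]
        have h1' : u ++ reflB N (v.drop u.length) ≤ v.drop u.length ++ u := by
          apply le_of_append_left_le (a := reflB N u)
          rw [hv] at h1
          rw [reflB_append, reflB_reflB hud, List.append_assoc] at h1
          exact h1
        have h2' : plusB (v.drop u.length) ++ (reflB N u ++ u) ≤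
            u ++ (reflB N u ++ plusB (v.drop u.length)) := by
          apply le_of_append_left_le (a := reflB N u)
          nth_rewrite 1 [hv] at h2
          rw [plusB_append _ _ hv2ne, List.append_assoc] at h2
          nth_rewrite 2 [hv] at h2
          rw [plusB_append _ _ hv2ne] at h2
          exact h2
        have hlv2 : (v.drop u.length).length ≤ n := by
          rw [List.length_drop]; omega
        exact (ih (v.drop u.length) hlv2 hv2ne).1 ⟨h1', h2'⟩

end Stmt6Aux

open Stmt6Aux

/-- Lemma 5.4 — for an admissible block and `q < p/2` one has
`(reflection of t_1⋯t_q)^+ ≤ t_{q+1}⋯t_{2q}`. -/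
theorem stmt6 (N : ℕ) (hN : 2 ≤ N) (w : List ℕ) (hadm : Admissible N w) :
    ∀ q : ℕ, 1 ≤ q → 2 * q < w.length →
      plusB (reflB N (w.take q)) ≤ (w.drop q).take q := by
  obtain ⟨hne, hdig, hlast, hineq⟩ := hadm
  intro q hq h2q
  have hqp : q < w.length := by omega
  have A := (hineq q hqp).1
  have B := (hineq (2 * q) h2q).2
  have hulen : (w.take q).length = q := by rw [List.length_take]; omega
  have hYlen : ((w.drop q).take q).length = q := by
    rw [List.length_take, List.length_drop]; omega
  have hdd : (w.drop q).drop q = w.drop (2 * q) := by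
    rw [List.drop_drop]; congr 1; omega
  have hone : reflB N (w.take q) ≤ (w.drop q).take q := by
    have hA' : reflB N (w.take q) ++ reflB N (w.drop q) ≤
        (w.drop q).take q ++ ((w.drop q).drop q ++ w.take q) := by
      rw [← reflB_append, List.take_append_drop, ← List.append_assoc,
        List.take_append_drop]
      exact A
    exact le_of_append_le (by rw [length_reflB, hulen, hYlen]) hA'
  rcases lt_or_eq_of_le hone with hlt | heq
  · exact plusB_le_of_lt (by rw [length_reflB, hulen, hYlen]) hlt
  · exfalso
    have hvne : w.drop (2 * q) ≠ [] := by
      intro hnil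
      have := congrArg List.length hnil
      simp only [List.length_drop, List.length_nil] at this
      omega
    have hune : w.take q ≠ [] := by
      intro hnil
      have := congrArg List.length hnil
      rw [hulen] at this
      simp at this; omega
    have hud : ∀ c ∈ w.take q, c < N := fun c hc => hdig c (List.take_subset q w hc)
    have hw : w = w.take q ++ (reflB N (w.take q) ++ w.drop (2 * q)) := by
      conv_lhs => rw [← List.take_append_drop q w]
      congr 1
      conv_lhs => rw [← List.take_append_drop q (w.drop q)]
      rw [heq, hdd]
    -- condition C.1 from A
    have h1 : w.take q ++ reflB N (w.drop (2 * q)) ≤ w.drop (2 * q) ++ w.take q := by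
      apply le_of_append_left_le (a := reflB N (w.take q))
      have e1 : reflB N w = reflB N (w.take q) ++
          (w.take q ++ reflB N (w.drop (2 * q))) := by
        conv_lhs => rw [hw]
        rw [reflB_append, reflB_append, reflB_reflB hud]
      have e2 : rotB w q = reflB N (w.take q) ++ (w.drop (2 * q) ++ w.take q) := by
        unfold rotB
        have hdropq : w.drop q = reflB N (w.take q) ++ w.drop (2 * q) := by
          conv_lhs => rw [← List.take_append_drop q (w.drop q)]
          rw [heq, hdd]
        rw [hdropq, List.append_assoc]
      rw [← e1, ← e2]
      exact A
    -- condition C.2 from B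
    have h2 : plusB (w.drop (2 * q)) ++ (reflB N (w.take q) ++ w.take q) ≤
        w.take q ++ (reflB N (w.take q) ++ plusB (w.drop (2 * q))) := by
      have htake2 : w.take (2 * q) = w.take q ++ reflB N (w.take q) := by
        conv_lhs => rw [hw]
        rw [← List.append_assoc]
        apply List.take_left'
        rw [List.length_append, length_reflB, hulen]
        omega
      have e3 : reflB N (w.take q ++ reflB N (w.take q)) =
          reflB N (w.take q) ++ w.take q := by
        rw [reflB_append, reflB_reflB hud]
      have e4 : plusB w = w.take q ++ (reflB N (w.take q) ++ plusB (w.drop (2 * q))) := by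
        conv_lhs => rw [hw]
        rw [plusB_append _ _ (by simp [hvne]), plusB_append _ _ hvne]
      rw [htake2, e3, e4] at B
      exact B
    exact (key N (w.take q) hune hud (w.drop (2 * q)).length (w.drop (2 * q))
      le_rfl hvne).1 ⟨h1, h2⟩
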